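/- arXiv:math/0601374 — 5 statements merged into one kernel-verified Lean document; each statement's English description precedes it below -/
import Mathlib

section
/- For finite abelian groups H and K, D(H ⊕ K) ≤ (D(H) − 1)·|K| + D(K). -/
/-!
Given a sequence over `H × K` of length `(D(H) - 1)|K| + D(K) ≥ D(H) D(K)` (pigeonhole on
prefix sums gives `D(K) ≤ |K|`), repeatedly split off nonempty blocks whose `K`-components sum
to zero: each block is found among `D(K)` remaining terms, so `D(H)` disjoint blocks can be
extracted. The `H`-components of the block sums form a
sequence of length `D(H)` over `H`, so some nonempty union of blocks has total sum zero.
-/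

/-- The Davenport constant: the smallest `d` such that every multiset of `d`
elements of `G` contains a nonempty zero-sum sub-multiset. -/
noncomputable def davenport (G : Type*) [AddCommGroup G] : ℕ :=
  sInf {d | ∀ S : Multiset G, Multiset.card S = d →
    ∃ T, T ≤ S ∧ T ≠ 0 ∧ T.sum = 0}

namespace Multiset

variable {α β : Type*}

theorem exists_le_map_eq_of_le_map {f : α → β} {s : Multiset α} {t : Multiset β}
    (h : t ≤ s.map f) : ∃ u ≤ s, u.map f = t := by
  induction s using Quotient.inductionOn
  induction t using Quotient.inductionOn
  obtain ⟨l, hperm, hsub⟩ := h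
  obtain ⟨u, hu, rfl⟩ := List.sublist_map_iff.mp hsub
  exact ⟨u, hu.subperm, Quotient.sound hperm⟩

theorem exists_le_card_eq {s : Multiset α} {n : ℕ} (h : n ≤ card s) :
    ∃ t ≤ s, card t = n := by
  obtain ⟨t, ht⟩ := card_pos_iff_exists_mem.mp
    (show 0 < card (powersetCard n s) by rw [card_powersetCard]; exact Nat.choose_pos h)
  exact ⟨t, mem_powersetCard.mp ht⟩

theorem sum_le_sum_of_le {s t : Multiset (Multiset α)} (h : s ≤ t) : s.sum ≤ t.sum := by
  obtain ⟨u, rfl⟩ := le_iff_exists_add.mp h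
  rw [sum_add]
  exact le_self_add

end Multiset

theorem List.exists_sublist_sum_eq_zero_of_sum_take_eq {G : Type*} [AddGroup G] {L : List G}
    {i j : ℕ} (hij : i < j) (hj : j ≤ L.length) (h : (L.take i).sum = (L.take j).sum) :
    ∃ l, l.Sublist L ∧ l ≠ [] ∧ l.sum = 0 := by
  refine ⟨(L.take j).drop i, (List.drop_sublist _ _).trans (List.take_sublist _ _), ?_, ?_⟩
  · rw [← List.length_pos_iff, List.length_drop, List.length_take]
    omega
  · have hsplit := congrArg List.sum (List.take_append_drop i (L.take j))
    rw [List.take_take, min_eq_left hij.le, List.sum_append, ← h] at hsplit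
    exact left_eq_add.mp hsplit.symm

def ForcesZeroSum (G : Type*) [AddCommGroup G] (d : ℕ) : Prop :=
  ∀ S : Multiset G, Multiset.card S = d → ∃ T, T ≤ S ∧ T ≠ 0 ∧ T.sum = 0

section ForcesZeroSum

variable {G H K : Type*} [AddCommGroup G] [AddCommGroup H] [AddCommGroup K] {a b d : ℕ}

theorem ForcesZeroSum.pos (h : ForcesZeroSum G d) : 0 < d := by
  by_contra! hd
  obtain ⟨T, hT, hT0, -⟩ := h 0 (by rw [Multiset.card_zero]; omega)
  exact hT0 (Multiset.le_zero.mp hT)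

theorem ForcesZeroSum.mono (h : ForcesZeroSum G a) (hab : a ≤ b) : ForcesZeroSum G b := by
  intro S hS
  obtain ⟨S₀, hS₀, hcard⟩ := Multiset.exists_le_card_eq (hS ▸ hab : a ≤ Multiset.card S)
  obtain ⟨T, hT, hT0, hsum⟩ := h S₀ hcard
  exact ⟨T, hT.trans hS₀, hT0, hsum⟩

theorem ForcesZeroSum.of_injective {f : G →+ H} (hf : Function.Injective f)
    (h : ForcesZeroSum H d) : ForcesZeroSum G d := by
  intro S hS
  obtain ⟨T, hT, hT0, hsum⟩ := h (S.map f) (by rw [Multiset.card_map, hS])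
  obtain ⟨U, hU, rfl⟩ := Multiset.exists_le_map_eq_of_le_map hT
  refine ⟨U, hU, fun hU0 => hT0 (by rw [hU0, Multiset.map_zero]), hf ?_⟩
  rw [map_multiset_sum, hsum, map_zero]

theorem forcesZeroSum_card (G : Type*) [AddCommGroup G] [Fintype G] :
    ForcesZeroSum G (Fintype.card G) := by
  intro S hS
  set L := S.toList
  have hlen : L.length = Fintype.card G := by rw [Multiset.length_toList, hS]
  obtain ⟨i, j, hne, hij⟩ := Fintype.exists_ne_map_eq_of_card_lt
    (fun i : Fin (Fintype.card G + 1) => (L.take i).sum) (by simp)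
  obtain ⟨l, hl, hl0, hsum⟩ : ∃ l, l.Sublist L ∧ l ≠ [] ∧ l.sum = 0 := by
    rcases lt_or_gt_of_ne (Fin.val_ne_of_ne hne) with h | h
    · exact List.exists_sublist_sum_eq_zero_of_sum_take_eq h (by omega) hij
    · exact List.exists_sublist_sum_eq_zero_of_sum_take_eq h (by omega) hij.symm
  refine ⟨l, ?_, by simpa using hl0, by simpa using hsum⟩
  simpa [L] using (Multiset.coe_le.mpr hl.subperm : (l : Multiset G) ≤ L)

theorem ForcesZeroSum.exists_block {φ : G →+ K} (hK : ForcesZeroSum K a) {S : Multiset G}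
    (hS : a ≤ Multiset.card S) :
    ∃ T ≤ S, T ≠ 0 ∧ φ T.sum = 0 ∧ Multiset.card T ≤ a := by
  obtain ⟨S₀, hS₀, hcard⟩ := Multiset.exists_le_card_eq hS
  obtain ⟨T, hT, hT0, hsum⟩ := hK (S₀.map φ) (by rw [Multiset.card_map, hcard])
  obtain ⟨U, hU, rfl⟩ := Multiset.exists_le_map_eq_of_le_map hT
  refine ⟨U, hU.trans hS₀, fun hU0 => hT0 (by rw [hU0, Multiset.map_zero]), ?_, ?_⟩
  · rw [map_multiset_sum, hsum]
  · exact hcard ▸ Multiset.card_le_card hU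

theorem ForcesZeroSum.exists_blocks {φ : G →+ K} (hK : ForcesZeroSum K a) (m : ℕ)
    {S : Multiset G} (hS : m * a ≤ Multiset.card S) :
    ∃ B : Multiset (Multiset G), Multiset.card B = m ∧ B.sum ≤ S ∧
      ∀ T ∈ B, T ≠ 0 ∧ φ T.sum = 0 := by
  induction m generalizing S with
  | zero => exact ⟨0, by simp⟩
  | succ m ih =>
    obtain ⟨T, hTS, hT0, hsum, hcard⟩ := hK.exists_block (φ := φ) (S := S) (by nlinarith)
    obtain ⟨R, rfl⟩ := Multiset.le_iff_exists_add.mp hTS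
    have hrest : m * a ≤ Multiset.card R := by
      rw [Multiset.card_add, Nat.succ_mul] at hS
      omega
    obtain ⟨B, hBcard, hBR, hB⟩ := ih hrest
    refine ⟨T ::ₘ B, by simp [hBcard], ?_, ?_⟩
    · rw [Multiset.sum_cons]
      exact add_le_add_right hBR T
    · simpa [hT0, hsum] using hB

theorem ForcesZeroSum.mul {φ : G →+ K} {ψ : G →+ H}
    (hker : ∀ x, φ x = 0 → ψ x = 0 → x = 0)
    (hK : ForcesZeroSum K a) (hH : ForcesZeroSum H b) : ForcesZeroSum G (b * a) := by
  intro S hS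
  obtain ⟨B, hBcard, hBS, hB⟩ := hK.exists_blocks (φ := φ) b hS.ge
  obtain ⟨U, hU, hU0, hUsum⟩ := hH (B.map fun T => ψ T.sum) (by rw [Multiset.card_map, hBcard])
  obtain ⟨V, hVB, rfl⟩ := Multiset.exists_le_map_eq_of_le_map hU
  have hV : ∀ T ∈ V, T ≠ 0 ∧ φ T.sum = 0 := fun T hT => hB T (Multiset.mem_of_le hVB hT)
  refine ⟨V.sum, (Multiset.sum_le_sum_of_le hVB).trans hBS, ?_, ?_⟩
  · obtain ⟨T, hT⟩ := Multiset.exists_mem_of_ne_zero (s := V) fun hV0 =>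
      hU0 (by rw [hV0, Multiset.map_zero])
    exact fun h0 => (hV T hT).1 (Multiset.le_zero.mp (h0 ▸ Multiset.le_sum_of_mem hT))
  · rw [← Multiset.join, Multiset.sum_join]
    refine hker _ ?_ ?_
    · rw [map_multiset_sum, Multiset.map_map]
      exact Multiset.sum_eq_zero fun x hx => by
        obtain ⟨T, hT, rfl⟩ := Multiset.mem_map.mp hx
        exact (hV T hT).2
    · rwa [map_multiset_sum, Multiset.map_map]

theorem davenport_le (h : ForcesZeroSum G d) : davenport G ≤ d :=
  Nat.sInf_le h

theorem forcesZeroSum_davenport (h : ∃ d, ForcesZeroSum G d) :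
    ForcesZeroSum G (davenport G) :=
  Nat.sInf_mem h

theorem davenport_eq_zero (h : ∀ d, ¬ ForcesZeroSum G d) : davenport G = 0 := by
  have hempty : {d | ForcesZeroSum G d} = ∅ := Set.eq_empty_of_forall_notMem h
  change sInf {d | ForcesZeroSum G d} = 0
  rw [hempty, Nat.sInf_empty]

end ForcesZeroSum

theorem davenport_prod_le (H K : Type*) [AddCommGroup H] [AddCommGroup K] [Fintype K] :
    davenport (H × K) ≤ (davenport H - 1) * Fintype.card K + davenport K := by
  by_cases hH : ∃ d, ForcesZeroSum H d
  · have hHD := forcesZeroSum_davenport hH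
    have hKD := forcesZeroSum_davenport ⟨_, forcesZeroSum_card K⟩
    refine davenport_le ((ForcesZeroSum.mul (φ := AddMonoidHom.snd H K)
      (ψ := AddMonoidHom.fst H K) (fun x h2 h1 => Prod.ext h1 h2) hKD hHD).mono ?_)
    obtain ⟨n, hn⟩ := Nat.exists_eq_add_of_lt hHD.pos
    calc davenport H * davenport K = (davenport H - 1) * davenport K + davenport K := by
          rw [hn]; simp [Nat.succ_mul]
      _ ≤ (davenport H - 1) * Fintype.card K + davenport K := by
          gcongr; exact davenport_le (forcesZeroSum_card K)
  -- `davenport` is the junk value `0` when no length forces a zero sum (e.g. for `H = ℤ`)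
  · have hHK : ∀ d, ¬ ForcesZeroSum (H × K) d := fun d hd =>
      hH ⟨d, hd.of_injective (f := AddMonoidHom.inl H K) fun x y h => congrArg Prod.fst h⟩
    rw [davenport_eq_zero hHK]
    exact Nat.zero_le _
end

section
/- Any 9 distinct elements of Z_3 ⊕ Z_3 ⊕ Z_3 contain a nonempty subsequence (subset) whose sum is zero. -/
open MvPolynomial Finset

set_option maxHeartbeats 1000000

theorem nine_distinct_zero_sum (S : Finset (ZMod 3 × ZMod 3 × ZMod 3))
    (hS : S.card = 9) :
    ∃ T ⊆ S, T.Nonempty ∧ ∑ x ∈ T, x = 0 := by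
  classical
  set σ := {v // v ∈ S}
  have hcard : Fintype.card σ = 9 := by simp [σ, hS]
  -- coordinates
  let coord : Fin 3 → (ZMod 3 × ZMod 3 × ZMod 3) → ZMod 3 :=
    fun j p => ![p.1, p.2.1, p.2.2] j
  -- polynomials
  let f : Fin 3 → MvPolynomial σ (ZMod 3) :=
    fun j => ∑ v : σ, C (coord j v.1) * X v ^ 2
  have hdeg : ∀ j, (f j).totalDegree ≤ 2 := by
    intro j
    refine (totalDegree_finset_sum _ _).trans (Finset.sup_le fun v _ => ?_)
    calc (C (coord j v.1) * X v ^ 2).totalDegree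
        ≤ (C (coord j v.1)).totalDegree + (X v ^ 2 : MvPolynomial σ (ZMod 3)).totalDegree :=
          totalDegree_mul _ _
      _ ≤ 0 + 2 := by
          gcongr
          · simp [totalDegree_C]
          · exact (totalDegree_pow _ _).trans (by simp [totalDegree_X])
      _ = 2 := by norm_num
  have hsum : (∑ j : Fin 3, (f j).totalDegree) < Fintype.card σ := by
    calc (∑ j : Fin 3, (f j).totalDegree) ≤ ∑ _j : Fin 3, 2 :=
          Finset.sum_le_sum fun j _ => hdeg j
      _ = 6 := by simp
      _ < 9 := by norm_num
      _ = Fintype.card σ := hcard.symm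
  have hdvd : (3 : ℕ) ∣ Fintype.card { x : σ → ZMod 3 // ∀ j, eval x (f j) = 0 } := by
    have h := char_dvd_card_solutions_of_fintype_sum_lt (p := 3) hsum
    convert h using 2
  have hzero : (⟨0, by intro j; simp [f]⟩ : { x : σ → ZMod 3 // ∀ j, eval x (f j) = 0 }) =
      (⟨0, by intro j; simp [f]⟩) := rfl
  -- there is a nonzero solution
  have hne : ∃ x : σ → ZMod 3, (∀ j, eval x (f j) = 0) ∧ x ≠ 0 := by
    by_contra h
    push_neg at h
    have hsub : ∀ y : { x : σ → ZMod 3 // ∀ j, eval x (f j) = 0 },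
        y = ⟨0, by intro j; simp [f]⟩ := by
      rintro ⟨y, hy⟩
      have := h y hy
      simp [this]
    have h1 : Fintype.card { x : σ → ZMod 3 // ∀ j, eval x (f j) = 0 } = 1 := by
      refine Fintype.card_eq_one_iff.mpr ⟨⟨0, by intro j; simp [f]⟩, fun y => hsub y⟩
    rw [h1] at hdvd
    omega
  obtain ⟨x, hxsol, hxne⟩ := hne
  -- square of nonzero element of ZMod 3 is 1
  have hsq : ∀ a : ZMod 3, a ≠ 0 → a ^ 2 = 1 := by decide
  let Tsub : Finset σ := Finset.univ.filter (fun v => x v ≠ 0)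
  refine ⟨Tsub.image Subtype.val, ?_, ?_, ?_⟩
  · intro y hy
    simp only [Finset.mem_image] at hy
    obtain ⟨v, _, rfl⟩ := hy
    exact v.2
  · obtain ⟨v, hv⟩ := Function.ne_iff.mp hxne
    exact ⟨v.1, Finset.mem_image.mpr ⟨v, Finset.mem_filter.mpr ⟨Finset.mem_univ _, by simpa using hv⟩, rfl⟩⟩
  · have hinj : Set.InjOn Subtype.val (Tsub : Set σ) := Subtype.val_injective.injOn
    rw [Finset.sum_image (fun a _ b _ h => Subtype.val_injective h)]
    have key : ∀ j : Fin 3, ∑ v ∈ Tsub, coord j v.1 = 0 := by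
      intro j
      have h1 : ∑ v ∈ Tsub, coord j v.1 = ∑ v ∈ Tsub, coord j v.1 * (x v) ^ 2 := by
        refine Finset.sum_congr rfl fun v hv => ?_
        rw [hsq (x v) (Finset.mem_filter.mp hv).2, mul_one]
      have h2' : ∑ v : σ, coord j v.1 * (x v) ^ 2 = ∑ v ∈ Tsub, coord j v.1 * (x v) ^ 2 := by
        refine (Finset.sum_filter_of_ne fun v _ h => ?_).symm
        intro hx0
        apply h
        rw [hx0]
        ring
      have h3 : ∑ v : σ, coord j v.1 * (x v) ^ 2 = eval x (f j) := by
        simp [f, eval_sum]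
      rw [h1, ← h2', h3, hxsol j]
    have k0 := key 0
    have k1 := key 1
    have k2 := key 2
    simp only [coord, Matrix.cons_val_zero, Matrix.cons_val_one, Matrix.head_cons] at k0 k1 k2
    refine Prod.ext ?_ (Prod.ext ?_ ?_)
    · rw [Prod.fst_sum]; simpa using k0
    · rw [Prod.snd_sum, Prod.fst_sum]; simpa using k1
    · rw [Prod.snd_sum, Prod.snd_sum]; simpa using k2
end

section
/- Let s, a, b be positive integers with a ≠ 1, let A be an integer with D^s(Z_s^3) ≤ A, let u = ⌊(A − s)/D(Z_s^3)⌋, and let h = D(Z_a ⊕ Z_{ab}). If h ≥ u + 1, then D(Z_s ⊕ Z_{sa} ⊕ Z_{sab}) ≤ (h − u − 1)s + A. -/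
open Multiset

/-- `davenportShort s G` : the smallest `t` such that every multiset of `t`
elements of `G` contains a nonempty zero-sum sub-multiset of size at most `s`. -/
noncomputable def davenportShort (s : ℕ) (G : Type*) [AddCommGroup G] : ℕ :=
  sInf {t | ∀ S : Multiset G, Multiset.card S = t →
    ∃ T, T ≤ S ∧ T ≠ 0 ∧ Multiset.card T ≤ s ∧ T.sum = 0}

lemma multiset_pullback {α β : Type*} (f : α → β) :
    ∀ (T' : Multiset β) (S : Multiset α), T' ≤ S.map f → ∃ T, T ≤ S ∧ T.map f = T' := by
  classical
  intro T'
  induction T' using Multiset.induction with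
  | empty => exact fun S _ => ⟨0, Multiset.zero_le _, rfl⟩
  | cons b T'' ih =>
    intro S hle
    have hb : b ∈ S.map f := mem_of_le hle (mem_cons_self _ _)
    obtain ⟨x, hxS, rfl⟩ := Multiset.mem_map.1 hb
    have hS : S = x ::ₘ S.erase x := (cons_erase hxS).symm
    rw [hS, map_cons] at hle
    obtain ⟨T, hTle, hTm⟩ := ih (S.erase x) ((cons_le_cons_iff _).1 hle)
    exact ⟨x ::ₘ T, by rw [hS]; exact cons_le_cons _ hTle, by rw [map_cons, hTm]⟩

lemma multiset_exists_le_card {α : Type*} :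
    ∀ (t : ℕ) (S : Multiset α), t ≤ Multiset.card S → ∃ S', S' ≤ S ∧ Multiset.card S' = t
  | 0, S, _ => ⟨0, Multiset.zero_le _, rfl⟩
  | (t+1), S, h => by
    classical
    obtain ⟨x, hx⟩ := card_pos_iff_exists_mem.1 (lt_of_lt_of_le (Nat.succ_pos t) h)
    obtain ⟨S', hle, hcard⟩ := multiset_exists_le_card t (S.erase x)
      (by rw [card_erase_of_mem hx, Nat.pred_eq_sub_one]; omega)
    exact ⟨x ::ₘ S', by rw [← cons_erase hx]; exact cons_le_cons _ hle, by simp [hcard]⟩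

lemma multiset_sum_sum {G : Type*} [AddCommMonoid G] (Bs : Multiset (Multiset G)) :
    Bs.sum.sum = (Bs.map Multiset.sum).sum := by
  induction Bs using Multiset.induction with
  | empty => simp
  | cons T Bs ih => simp [Multiset.sum_cons, ih]

lemma pigeonhole_short (G : Type*) [AddCommGroup G] [Fintype G] (e : ℕ) (he : 0 < e)
    (hexp : ∀ x : G, e • x = 0) :
    ∀ S : Multiset G, Multiset.card S = (e - 1) * Fintype.card G + 1 →
      ∃ T, T ≤ S ∧ T ≠ 0 ∧ Multiset.card T ≤ e ∧ T.sum = 0 := by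
  classical
  intro S hcard
  have hx : ∃ x : G, e ≤ S.count x := by
    by_contra hc
    push_neg at hc
    have hle : Multiset.card S ≤ (e - 1) * Fintype.card G := by
      calc Multiset.card S = ∑ x ∈ S.toFinset, S.count x := (Multiset.toFinset_sum_count_eq S).symm
        _ ≤ ∑ _x ∈ S.toFinset, (e - 1) :=
            Finset.sum_le_sum (fun x _ => Nat.le_sub_one_of_lt (hc x))
        _ = S.toFinset.card * (e - 1) := by rw [Finset.sum_const, smul_eq_mul]
        _ ≤ Fintype.card G * (e - 1) := Nat.mul_le_mul_right _ (Finset.card_le_univ _)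
        _ = (e - 1) * Fintype.card G := Nat.mul_comm _ _
    omega
  obtain ⟨x, hx⟩ := hx
  refine ⟨Multiset.replicate e x, ?_, ?_, ?_, ?_⟩
  · rw [Multiset.le_iff_count]
    intro y
    rw [Multiset.count_replicate]
    split
    · next hxy => subst hxy; exact hx
    · exact Nat.zero_le _
  · intro h0
    have := congrArg Multiset.card h0
    simp at this
    omega
  · simp
  · rw [Multiset.sum_replicate]; exact hexp x

lemma sInf_prop_short {G : Type*} [AddCommGroup G] {s A : ℕ}
    (hne : Set.Nonempty {t | ∀ S : Multiset G, Multiset.card S = t →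
      ∃ T, T ≤ S ∧ T ≠ 0 ∧ Multiset.card T ≤ s ∧ T.sum = 0})
    (hle : davenportShort s G ≤ A) :
    ∀ S : Multiset G, A ≤ Multiset.card S →
      ∃ T, T ≤ S ∧ T ≠ 0 ∧ Multiset.card T ≤ s ∧ T.sum = 0 := by
  intro S hS
  have hmem := Nat.sInf_mem hne
  rw [show sInf {t | ∀ S : Multiset G, Multiset.card S = t →
      ∃ T, T ≤ S ∧ T ≠ 0 ∧ Multiset.card T ≤ s ∧ T.sum = 0} = davenportShort s G from rfl] at hmem
  obtain ⟨S', hS'le, hS'c⟩ := multiset_exists_le_card _ S (le_trans hle hS)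
  obtain ⟨T, hT, h0, hc, hsum⟩ := hmem S' hS'c
  exact ⟨T, le_trans hT hS'le, h0, hc, hsum⟩

lemma sInf_prop_dav {G : Type*} [AddCommGroup G]
    (hne : Set.Nonempty {d | ∀ S : Multiset G, Multiset.card S = d →
      ∃ T, T ≤ S ∧ T ≠ 0 ∧ T.sum = 0}) :
    ∀ S : Multiset G, davenport G ≤ Multiset.card S →
      ∃ T, T ≤ S ∧ T ≠ 0 ∧ Multiset.card T ≤ davenport G ∧ T.sum = 0 := by
  intro S hS
  have hmem := Nat.sInf_mem hne
  rw [show sInf {d | ∀ S : Multiset G, Multiset.card S = d →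
      ∃ T, T ≤ S ∧ T ≠ 0 ∧ T.sum = 0} = davenport G from rfl] at hmem
  obtain ⟨S', hS'le, hS'c⟩ := multiset_exists_le_card _ S hS
  obtain ⟨T, hT, h0, hsum⟩ := hmem S' hS'c
  exact ⟨T, hT.trans hS'le, h0, hS'c ▸ card_le_card hT, hsum⟩

lemma extract_iter {G H : Type*} [AddCommGroup G] [AddCommGroup H] (π : G →+ H) (B c : ℕ)
    (hB : ∀ S : Multiset G, c ≤ Multiset.card S →
      ∃ T, T ≤ S ∧ T ≠ 0 ∧ Multiset.card T ≤ B ∧ π T.sum = 0) :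
    ∀ (k : ℕ) (S : Multiset G), k * B + c ≤ Multiset.card S + B →
      ∃ Bs : Multiset (Multiset G), Multiset.card Bs = k ∧ Bs.sum ≤ S ∧
        Multiset.card Bs.sum ≤ k * B ∧ ∀ T ∈ Bs, T ≠ 0 ∧ π T.sum = 0 := by
  classical
  intro k
  induction k with
  | zero => intro S _; exact ⟨0, rfl, Multiset.zero_le _, by simp, by simp⟩
  | succ k ih =>
    intro S hS
    have he : (k + 1) * B = k * B + B := by ring
    have h1 : k * B + c ≤ Multiset.card S := by omega
    obtain ⟨T, hTS, hT0, hTB, hTsum⟩ := hB S (by omega)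
    have hTc := card_le_card hTS
    obtain ⟨Bs, hk, hle, hcard, hprop⟩ := ih (S - T) (by rw [Multiset.card_sub hTS]; omega)
    refine ⟨T ::ₘ Bs, by simp [hk], ?_, ?_, ?_⟩
    · rw [Multiset.sum_cons]
      exact (le_tsub_iff_left hTS).1 hle
    · rw [Multiset.sum_cons, Multiset.card_add]
      omega
    · intro T' hT'
      rcases Multiset.mem_cons.1 hT' with h | h
      · subst h; exact ⟨hT0, hTsum⟩
      · exact hprop T' h

def mulsHom (s n m : ℕ) (hm : m = s * n) : ZMod n →+ ZMod m :=
  ZMod.lift n ⟨(AddMonoidHom.mulLeft (s : ZMod m)).comp (Int.castAddHom (ZMod m)), by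
    show (s : ZMod m) * ((n : ℤ) : ZMod m) = 0
    push_cast
    rw [← Nat.cast_mul, ← hm, ZMod.natCast_self]⟩

lemma mulsHom_natCast (s n m : ℕ) (hm : m = s * n) (c : ℕ) :
    mulsHom s n m hm ((c : ℕ) : ZMod n) = ((s * c : ℕ) : ZMod m) := by
  have h1 : ((c : ℕ) : ZMod n) = ((c : ℤ) : ZMod n) := by push_cast; rfl
  rw [h1, mulsHom, ZMod.lift_coe]
  show (s : ZMod m) * ((c : ℤ) : ZMod m) = _
  push_cast
  ring

def pi3 (s a b : ℕ) : (ZMod s × ZMod (s * a) × ZMod (s * a * b)) →+ (ZMod s × ZMod s × ZMod s) :=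
  (AddMonoidHom.id (ZMod s)).prodMap
    (((ZMod.castHom ⟨a, rfl⟩ (ZMod s)).toAddMonoidHom).prodMap
      ((ZMod.castHom ⟨a * b, by ring⟩ (ZMod s)).toAddMonoidHom))

def chi (s a b : ℕ) : (ZMod a × ZMod (a * b)) →+ (ZMod s × ZMod (s * a) × ZMod (s * a * b)) :=
  (0 : (ZMod a × ZMod (a * b)) →+ ZMod s).prod
    ((mulsHom s a (s * a) rfl).prodMap (mulsHom s (a * b) (s * a * b) (by ring)))

lemma ker_sub_range (s a b : ℕ) (hs : 0 < s) (ha : 0 < a) (hb : 0 < b)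
    (x : ZMod s × ZMod (s * a) × ZMod (s * a * b)) (hx : pi3 s a b x = 0) :
    ∃ k, chi s a b k = x := by
  haveI : NeZero s := ⟨hs.ne'⟩
  haveI : NeZero (s * a) := ⟨Nat.mul_ne_zero hs.ne' ha.ne'⟩
  haveI : NeZero (s * a * b) := ⟨Nat.mul_ne_zero (Nat.mul_ne_zero hs.ne' ha.ne') hb.ne'⟩
  obtain ⟨x1, x2, x3⟩ := x
  simp only [pi3, AddMonoidHom.coe_prodMap, Prod.map_apply, AddMonoidHom.id_apply,
    RingHom.toAddMonoidHom_eq_coe, AddMonoidHom.coe_coe, ZMod.castHom_apply,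
    Prod.mk_eq_zero] at hx
  obtain ⟨h1, h2, h3⟩ := hx
  have h2' : ((x2.val : ℕ) : ZMod s) = 0 := by rw [ZMod.natCast_val]; exact h2
  have h3' : ((x3.val : ℕ) : ZMod s) = 0 := by rw [ZMod.natCast_val]; exact h3
  obtain ⟨c2, hc2⟩ := (ZMod.natCast_eq_zero_iff _ _).1 h2'
  obtain ⟨c3, hc3⟩ := (ZMod.natCast_eq_zero_iff _ _).1 h3'
  refine ⟨((c2 : ZMod a), (c3 : ZMod (a * b))), ?_⟩
  simp only [chi, AddMonoidHom.prod_apply, AddMonoidHom.zero_apply,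
    AddMonoidHom.coe_prodMap, Prod.map_apply, Prod.mk.injEq]
  refine ⟨h1.symm, ?_, ?_⟩
  · rw [mulsHom_natCast, ← hc2, ZMod.natCast_zmod_val]
  · rw [mulsHom_natCast, ← hc3, ZMod.natCast_zmod_val]

theorem davenport_lemma1 (s a b : ℕ) (hs : 0 < s) (ha : 0 < a) (hb : 0 < b)
    (ha1 : a ≠ 1) (A u h : ℕ)
    (hA : davenportShort s (ZMod s × ZMod s × ZMod s) ≤ A)
    (hu : u = (A - s) / davenport (ZMod s × ZMod s × ZMod s))
    (hh : h = davenport (ZMod a × ZMod (a * b)))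
    (hge : u + 1 ≤ h) :
    davenport (ZMod s × ZMod (s * a) × ZMod (s * a * b)) ≤ (h - u - 1) * s + A := by
  classical
  haveI : NeZero s := ⟨hs.ne'⟩
  haveI : NeZero a := ⟨ha.ne'⟩
  haveI : NeZero (a * b) := ⟨Nat.mul_ne_zero ha.ne' hb.ne'⟩
  -- nonemptiness of the defining sets
  have hexpH : ∀ x : ZMod s × ZMod s × ZMod s, s • x = 0 := by
    intro x
    have hz : ∀ c : ZMod s, s • c = 0 := fun c => by
      rw [nsmul_eq_mul, ZMod.natCast_self, zero_mul]
    obtain ⟨x1, x2, x3⟩ := x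
    rw [Prod.smul_mk, Prod.smul_mk, hz, hz, hz]
    rfl
  have hneH_short : Set.Nonempty {t | ∀ S : Multiset (ZMod s × ZMod s × ZMod s),
      Multiset.card S = t → ∃ T, T ≤ S ∧ T ≠ 0 ∧ Multiset.card T ≤ s ∧ T.sum = 0} :=
    ⟨_, pigeonhole_short _ s hs hexpH⟩
  have hneH_dav : Set.Nonempty {d | ∀ S : Multiset (ZMod s × ZMod s × ZMod s),
      Multiset.card S = d → ∃ T, T ≤ S ∧ T ≠ 0 ∧ T.sum = 0} := by
    obtain ⟨N, hN⟩ := hneH_short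
    exact ⟨N, fun S hS => by obtain ⟨T, h1, h2, _, h4⟩ := hN S hS; exact ⟨T, h1, h2, h4⟩⟩
  have hexpK : ∀ x : ZMod a × ZMod (a * b), (a * b) • x = 0 := by
    intro x
    obtain ⟨x1, x2⟩ := x
    have e1 : (a * b) • x1 = 0 := by
      rw [nsmul_eq_mul]
      push_cast
      rw [ZMod.natCast_self, zero_mul, zero_mul]
    have e2 : (a * b) • x2 = 0 := by
      rw [nsmul_eq_mul, ZMod.natCast_self, zero_mul]
    rw [Prod.smul_mk, e1, e2]
    rfl
  have hneK_dav : Set.Nonempty {d | ∀ S : Multiset (ZMod a × ZMod (a * b)),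
      Multiset.card S = d → ∃ T, T ≤ S ∧ T ≠ 0 ∧ T.sum = 0} := by
    refine ⟨(a * b - 1) * Fintype.card (ZMod a × ZMod (a * b)) + 1, fun S hS => ?_⟩
    obtain ⟨T, h1, h2, _, h4⟩ := pigeonhole_short _ (a * b) (Nat.mul_pos ha hb) hexpK S hS
    exact ⟨T, h1, h2, h4⟩
  set D := davenport (ZMod s × ZMod s × ZMod s) with hD
  -- extraction lemmas over the big group
  have hextr_short : ∀ S : Multiset (ZMod s × ZMod (s * a) × ZMod (s * a * b)),
      A ≤ Multiset.card S →
      ∃ T, T ≤ S ∧ T ≠ 0 ∧ Multiset.card T ≤ s ∧ pi3 s a b T.sum = 0 := by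
    intro S hS
    obtain ⟨T', h1, h2, h3, h4⟩ := sInf_prop_short hneH_short hA (S.map (pi3 s a b))
      (by rwa [Multiset.card_map])
    obtain ⟨T, hTle, hTm⟩ := multiset_pullback _ T' S h1
    refine ⟨T, hTle, ?_, ?_, ?_⟩
    · intro h0; rw [h0] at hTm; simp at hTm; exact h2 hTm.symm
    · rw [← hTm, Multiset.card_map] at h3; exact h3
    · rw [map_multiset_sum, hTm]; exact h4
  have hextr_D : ∀ S : Multiset (ZMod s × ZMod (s * a) × ZMod (s * a * b)),
      D ≤ Multiset.card S →
      ∃ T, T ≤ S ∧ T ≠ 0 ∧ Multiset.card T ≤ D ∧ pi3 s a b T.sum = 0 := by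
    intro S hS
    obtain ⟨T', h1, h2, h3, h4⟩ := sInf_prop_dav hneH_dav (S.map (pi3 s a b))
      (by rwa [Multiset.card_map])
    obtain ⟨T, hTle, hTm⟩ := multiset_pullback _ T' S h1
    refine ⟨T, hTle, ?_, ?_, ?_⟩
    · intro h0; rw [h0] at hTm; simp at hTm; exact h2 hTm.symm
    · rw [← hTm, Multiset.card_map] at h3; exact h3
    · rw [map_multiset_sum, hTm]; exact h4
  -- main argument
  apply Nat.sInf_le
  intro S hScard
  have hhu : h - u = (h - u - 1) + 1 := by omega
  obtain ⟨Bs1, hBs1card, hBs1le, hBs1sum, hBs1prop⟩ :=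
    extract_iter (pi3 s a b) s A hextr_short (h - u) S
      (by rw [hhu, Nat.succ_mul, hScard]; omega)
  have hud : u * D ≤ A - s := by rw [hu]; exact Nat.div_mul_le_self _ _
  rw [hhu, Nat.succ_mul] at hBs1sum
  have hcardR : u * D ≤ Multiset.card (S - Bs1.sum) := by
    rw [Multiset.card_sub hBs1le, hScard]
    omega
  obtain ⟨Bs2, hBs2card, hBs2le, _, hBs2prop⟩ :=
    extract_iter (pi3 s a b) D D hextr_D u (S - Bs1.sum) (by omega)
  have hBsle : (Bs1 + Bs2).sum ≤ S := by
    rw [Multiset.sum_add]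
    have h2 := (le_tsub_iff_right hBs1le).1 hBs2le
    calc Bs1.sum + Bs2.sum = Bs2.sum + Bs1.sum := add_comm _ _
      _ ≤ S := h2
  have hBsprop : ∀ T ∈ Bs1 + Bs2, T ≠ 0 ∧ pi3 s a b T.sum = 0 := by
    intro T hT
    rcases Multiset.mem_add.1 hT with h' | h'
    exacts [hBs1prop T h', hBs2prop T h']
  have hBscard : Multiset.card (Bs1 + Bs2) = h := by
    rw [Multiset.card_add, hBs1card, hBs2card]; omega
  -- pass to the quotient group
  let φ : Multiset (ZMod s × ZMod (s * a) × ZMod (s * a * b)) → ZMod a × ZMod (a * b) :=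
    fun T => if hT : pi3 s a b T.sum = 0 then
      Classical.choose (ker_sub_range s a b hs ha hb T.sum hT) else 0
  have hφ : ∀ T, pi3 s a b T.sum = 0 → chi s a b (φ T) = T.sum := by
    intro T hT
    simp only [φ, dif_pos hT]
    exact Classical.choose_spec (ker_sub_range s a b hs ha hb T.sum hT)
  have hKmem := Nat.sInf_mem hneK_dav
  obtain ⟨M', hM'le, hM'0, hM'sum⟩ := hKmem ((Bs1 + Bs2).map φ)
    (by rw [Multiset.card_map, hBscard, hh]; rfl)
  obtain ⟨Bs', hBs'le, hBs'map⟩ := multiset_pullback φ M' (Bs1 + Bs2) hM'le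
  refine ⟨Bs'.sum, ?_, ?_, ?_⟩
  · refine le_trans ?_ hBsle
    obtain ⟨C, hC⟩ := Multiset.le_iff_exists_add.1 hBs'le
    rw [hC, Multiset.sum_add]
    exact Multiset.le_add_right _ _
  · have hBs'0 : Bs' ≠ 0 := by
      intro h0; rw [h0] at hBs'map; simp at hBs'map; exact hM'0 hBs'map.symm
    obtain ⟨T0, hT0⟩ := card_pos_iff_exists_mem.1 (Multiset.card_pos.2 hBs'0)
    have hT0ne : T0 ≠ 0 := (hBsprop T0 (Multiset.mem_of_le hBs'le hT0)).1
    obtain ⟨C, hC⟩ := Multiset.exists_cons_of_mem hT0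
    intro h0
    rw [hC, Multiset.sum_cons] at h0
    have hcc : Multiset.card (T0 + C.sum) = 0 := by rw [h0]; rfl
    rw [Multiset.card_add] at hcc
    exact hT0ne (Multiset.card_eq_zero.1 (by omega))
  · rw [multiset_sum_sum]
    have hmapeq : Bs'.map Multiset.sum = M'.map (chi s a b) := by
      rw [← hBs'map, Multiset.map_map]
      apply Multiset.map_congr rfl
      intro T hT
      exact (hφ T (hBsprop T (Multiset.mem_of_le hBs'le hT)).2).symm
    rw [hmapeq, ← map_multiset_sum, hM'sum, _root_.map_zero]
end

section
/- Let t be a positive integer and let A = D^s(Z_3^3) with s = 3 (so A = 17), u = ⌊(17 − 3)/D(Z_3^3)⌋. Then D(Z_3 ⊕ Z_3 ⊕ Z_{3t}) ≤ 3t + 8. -/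
open Finset MvPolynomial Module

namespace Multiset

variable {α β : Type*}

theorem exists_le_map_eq_of_le_map_s9 {f : α → β} {S : Multiset α} {T' : Multiset β}
    (h : T' ≤ S.map f) : ∃ T ≤ S, T.map f = T' := by
  classical
  induction S using Multiset.induction_on generalizing T' with
  | empty => exact ⟨0, le_rfl, by simp_all⟩
  | cons a S ih =>
    rw [map_cons] at h
    by_cases ha : f a ∈ T'
    · obtain ⟨T, hTS, hT⟩ := ih (erase_le_iff_le_cons.mpr h)
      exact ⟨a ::ₘ T, cons_le_cons a hTS, by rw [map_cons, hT, cons_erase ha]⟩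
    · obtain ⟨T, hTS, hT⟩ := ih ((le_cons_of_notMem ha).mp h)
      exact ⟨T, hTS.trans (le_cons_self S a), hT⟩

theorem exists_blocks {P : Multiset α → Prop} {n m : ℕ}
    (hP : ∀ M : Multiset α, n ≤ card M → ∃ B ≤ M, card B ≤ m ∧ P B) (k : ℕ) (S : Multiset α)
    (hS : ∀ j < k, n + m * j ≤ card S) :
    ∃ Bs : Multiset (Multiset α),
      card Bs = k ∧ Bs.join ≤ S ∧ card Bs.join ≤ m * k ∧ ∀ B ∈ Bs, P B := by
  classical
  induction k with
  | zero => exact ⟨0, rfl, by simp, by simp, by simp⟩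
  | succ k ih =>
    obtain ⟨Bs, hcard, hle, hjoin, hBs⟩ := ih fun j hj => hS j (by lia)
    have hk := hS k (by lia)
    obtain ⟨B, hB, hBm, hPB⟩ := hP (S - Bs.join) (by rw [card_sub hle]; lia)
    refine ⟨B ::ₘ Bs, by simp [hcard], ?_, ?_, ?_⟩
    · rw [join_cons]
      exact (le_tsub_iff_right hle).mp hB
    · rw [join_cons, card_add]
      lia
    · simpa [hPB] using hBs

theorem exists_le_sum_eq_zero_of_natCard_le {G : Type*} [AddCommGroup G] [Finite G]
    (S : Multiset G) (h : Nat.card G ≤ card S) : ∃ T ≤ S, T ≠ 0 ∧ T.sum = 0 := by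
  have := Fintype.ofFinite G
  obtain ⟨l, rfl⟩ := Quot.exists_rep S
  change Nat.card G ≤ l.length at h
  -- pigeonhole on the `length + 1` prefix sums
  obtain ⟨i, hi, j, hj, hij, heq⟩ := exists_ne_map_eq_of_card_lt_of_maps_to
    (s := Finset.range (l.length + 1)) (t := (univ : Finset G)) (f := fun i => (l.take i).sum)
    (by simpa [Nat.card_eq_fintype_card, Nat.lt_succ_iff] using h) (by simp)
  wlog hlt : i < j generalizing i j
  · exact this j hj i hi hij.symm heq.symm (by lia)
  refine ⟨((l.take j).drop i : List G), ?_, ?_, ?_⟩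
  · exact coe_le.mpr ((List.drop_sublist _ _).trans (List.take_sublist _ _)).subperm
  · simp only [Finset.mem_range] at hj
    simp only [ne_eq, coe_eq_zero, List.drop_eq_nil_iff, List.length_take, inf_le_iff, not_or,
      not_le]
    lia
  · have hsplit := congrArg List.sum (List.take_append_drop i (l.take j))
    rw [List.take_take, min_eq_left hlt.le, List.sum_append] at hsplit
    rw [← heq] at hsplit
    simpa using hsplit

theorem exists_le_sum_eq_zero_of_forall_mem_addSubgroup {G : Type*} [AddCommGroup G]
    (K : AddSubgroup G) [Finite K] (S : Multiset G) (hSK : ∀ x ∈ S, x ∈ K)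
    (h : Nat.card K ≤ card S) :
    ∃ T ≤ S, T ≠ 0 ∧ T.sum = 0 := by
  lift S to Multiset K using hSK
  obtain ⟨T, hTS, hT0, hTsum⟩ := exists_le_sum_eq_zero_of_natCard_le S (by simpa using h)
  refine ⟨T.map (↑), map_le_map hTS, by simpa using hT0, ?_⟩
  rw [← AddSubgroup.val_multiset_sum, hTsum, ZeroMemClass.coe_zero]

theorem exists_le_sum_eq_zero_of_blocks {G H : Type*} [AddCommGroup G] [AddCommGroup H]
    (φ : G →+ H) [Finite φ.ker] {S : Multiset G} {Bs : Multiset (Multiset G)}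
    (hBs : Bs.join ≤ S) (hcard : Nat.card φ.ker ≤ card Bs) (hB : ∀ B ∈ Bs, B ≠ 0 ∧ φ B.sum = 0) :
    ∃ T ≤ S, T ≠ 0 ∧ T.sum = 0 := by
  obtain ⟨T', hT'le, hT'0, hT'sum⟩ :=
    exists_le_sum_eq_zero_of_forall_mem_addSubgroup φ.ker (Bs.map sum)
    (by simpa using fun B hB' => (hB B hB').2) (by simpa using hcard)
  obtain ⟨Cs, hCs, rfl⟩ := exists_le_map_eq_of_le_map_s9 hT'le
  obtain ⟨C, hC⟩ := exists_mem_of_ne_zero (by simpa using hT'0 : Cs ≠ 0)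
  refine ⟨Cs.join, ?_, ?_, by rwa [sum_join]⟩
  · obtain ⟨Ds, rfl⟩ := exists_add_of_le hCs
    exact (le_add_right _ _).trans (join_add Cs Ds ▸ hBs)
  · intro h0
    exact (hB C (mem_of_le hCs hC)).1 (sum_eq_zero_iff.mp h0 C hC)

end Multiset

theorem exists_subset_nonempty_sum_eq_zero_of_finrank_mul_lt {K V ι : Type*} [Field K] [Fintype K]
    [AddCommGroup V] [Module K V] [FiniteDimensional K V] (a : ι → V) (s : Finset ι)
    (hs : finrank K V * (Fintype.card K - 1) < #s) :
    ∃ t ⊆ s, t.Nonempty ∧ ∑ i ∈ t, a i = 0 := by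
  classical
  obtain ⟨p, hp⟩ := CharP.exists K
  let b := Module.Free.chooseBasis K V
  -- Chevalley–Warning gives a common root `x ≠ 0` of the `f j`; as `y ↦ y ^ (q - 1)` is the
  -- indicator of `y ≠ 0`, the support of `x` indexes a zero-sum subfamily.
  let f : Module.Free.ChooseBasisIndex K V → MvPolynomial s K :=
    fun j => ∑ i : s, b.repr (a i) j • X i ^ (Fintype.card K - 1)
  have hdeg : ∑ j, (f j).totalDegree < Fintype.card s := by
    refine lt_of_le_of_lt ?_ (by simpa using hs)
    calc ∑ j, (f j).totalDegree ≤ ∑ _j, (Fintype.card K - 1) := by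
          gcongr with j
          refine totalDegree_finsetSum_le fun i _ => ?_
          exact (totalDegree_smul_le _ _).trans (totalDegree_X_pow _ _).le
      _ = finrank K V * (Fintype.card K - 1) := by
          simp [Module.finrank_eq_card_chooseBasisIndex]
  have hq : 1 ≤ Fintype.card K - 1 := by
    have := Fintype.one_lt_card (α := K); lia
  let zero : {x : s → K // ∀ j, eval x (f j) = 0} :=
    ⟨0, fun j => by simp [f, zero_pow (by lia : Fintype.card K - 1 ≠ 0)]⟩
  have hpN := char_dvd_card_solutions_of_fintype_sum_lt p hdeg
  obtain ⟨x, hx⟩ := Fintype.exists_ne_of_one_lt_card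
    ((CharP.char_is_prime K p).one_lt.trans_le
      (Nat.le_of_dvd (Fintype.card_pos_iff.mpr ⟨zero⟩) hpN)) zero
  refine ⟨({i | x.1 i ≠ 0} : Finset s).map (Function.Embedding.subtype _), fun i hi => ?_, ?_, ?_⟩
  · obtain ⟨i, -, rfl⟩ := Finset.mem_map.mp hi
    exact i.2
  · rw [← Subtype.coe_ne_coe, Function.ne_iff] at hx
    obtain ⟨i, hi⟩ := hx
    exact ⟨i, by simpa [zero] using hi⟩
  · refine b.ext_elem fun j => ?_
    calc b.repr (∑ i ∈ _, a i) j = eval x.1 (f j) := by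
          simp only [f, map_sum, smul_eval, map_pow, eval_X, Finset.sum_map, Finset.sum_filter,
            Finsupp.coe_finsetSum, Finset.sum_apply, Function.Embedding.coe_subtype]
          refine Finset.sum_congr rfl fun i _ => ?_
          split_ifs with hi
          · rw [FiniteField.pow_card_sub_one_eq_one _ hi, mul_one]
          · rw [not_not.mp hi, zero_pow (by lia), mul_zero, map_zero, Finsupp.zero_apply]
      _ = b.repr 0 j := by rw [x.2 j, map_zero, Finsupp.zero_apply]

def HasShortZeroSums (G : Type*) [AddCommGroup G] (n m : ℕ) : Prop :=
  ∀ S : Multiset G, n ≤ Multiset.card S →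
    ∃ T ≤ S, T ≠ 0 ∧ Multiset.card T ≤ m ∧ T.sum = 0

theorem HasShortZeroSums.exists_le_map_sum_eq_zero {G H : Type*} [AddCommGroup G]
    [AddCommGroup H] {n m : ℕ} (h : HasShortZeroSums H n m) (φ : G →+ H) (S : Multiset G)
    (hS : n ≤ Multiset.card S) :
    ∃ B ≤ S, Multiset.card B ≤ m ∧ B ≠ 0 ∧ φ B.sum = 0 := by
  obtain ⟨T', hT'S, hT'0, hT'm, hT'sum⟩ := h (S.map φ) (by simpa using hS)
  obtain ⟨B, hBS, rfl⟩ := Multiset.exists_le_map_eq_of_le_map_s9 hT'S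
  exact ⟨B, hBS, by simpa using hT'm, by simpa using hT'0, by rwa [map_multiset_sum]⟩

theorem hasShortZeroSums_of_finrank (K V : Type*) [Field K] [Fintype K] [AddCommGroup V]
    [Module K V] [FiniteDimensional K V] :
    HasShortZeroSums V (finrank K V * (Fintype.card K - 1) + 1)
      (finrank K V * (Fintype.card K - 1) + 1) := by
  classical
  intro S hS
  obtain ⟨s, hsS, hs⟩ := exists_subset_card_eq (s := S.toEnumFinset)
    (hS.trans_eq S.card_toEnumFinset.symm)
  obtain ⟨t, hts, ht0, htsum⟩ :=
    exists_subset_nonempty_sum_eq_zero_of_finrank_mul_lt (K := K) Prod.fst s (by lia)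
  refine ⟨t.1.map Prod.fst, Multiset.map_fst_le_of_subset_toEnumFinset (hts.trans hsS),
    by simpa using ht0.ne_empty, ?_, htsum⟩
  simpa [hs] using card_le_card hts

local notation "𝔽₃³" => ZMod 3 × ZMod 3 × ZMod 3

theorem hasShortZeroSums_seven_seven : HasShortZeroSums 𝔽₃³ 7 7 := by
  simpa using hasShortZeroSums_of_finrank (ZMod 3) 𝔽₃³

def capCompatible (acc : List 𝔽₃³) (p : 𝔽₃³) : Bool :=
  acc.all fun x => acc.all fun y => x == y || x + y + p != 0

/-- Whether `n` more elements, each `d` or `-d` for distinct `d ∈ dirs`, can be added one by one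
to `acc` so that no new element `p` satisfies `x + y + p = 0` with `x ≠ y` already present. -/
def capSearch : List 𝔽₃³ → List 𝔽₃³ → ℕ → Bool
  | _, _, 0 => true
  | _, [], _ + 1 => false
  | acc, d :: rest, n + 1 =>
    (capCompatible acc d && capSearch (d :: acc) rest n) ||
    (capCompatible acc (-d) && capSearch (-d :: acc) rest n) ||
    (n + 1 ≤ rest.length && capSearch acc rest (n + 1))

def capDirections : List 𝔽₃³ :=
  [(1,0,0),(0,1,0),(1,1,0),(2,1,0),(0,0,1),(1,0,1),(2,0,1),
   (0,1,1),(1,1,1),(2,1,1),(0,2,1),(1,2,1),(2,2,1)]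

theorem mem_capDirections_or_neg_mem :
    ∀ v : 𝔽₃³, v ≠ 0 → v ∈ capDirections ∨ -v ∈ capDirections := by
  decide

theorem capSearch_capDirections_nine : capSearch [] capDirections 9 = false := by
  decide +kernel

section capSearch

variable (s : Finset 𝔽₃³) (hs : ∀ x ∈ s, ∀ y ∈ s, ∀ p ∈ s, x ≠ y → x + y + p ≠ 0)
include hs

theorem capCompatible_eq_true {acc : List 𝔽₃³} (hacc : ∀ x ∈ acc, x ∈ s) {p : 𝔽₃³} (hp : p ∈ s) :
    capCompatible acc p = true := by
  simp only [capCompatible, List.all_eq_true, Bool.or_eq_true, beq_iff_eq, bne_iff_ne]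
  intro x hx y hy
  by_cases hxy : x = y
  · exact .inl hxy
  · exact .inr (hs x (hacc x hx) y (hacc y hy) p hp hxy)

theorem capSearch_eq_true (dirs acc : List 𝔽₃³) (n : ℕ) (hacc : ∀ x ∈ acc, x ∈ s)
    (hn : n ≤ dirs.countP fun d => d ∈ s ∨ -d ∈ s) : capSearch acc dirs n = true := by
  induction dirs generalizing acc n with
  | nil => simp_all [capSearch]
  | cons d rest ih =>
    cases n with
    | zero => rfl
    | succ n =>
      rw [List.countP_cons] at hn
      simp only [capSearch, Bool.or_eq_true, Bool.and_eq_true, decide_eq_true_eq]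
      by_cases hd : d ∈ s
      · refine .inl (.inl ⟨capCompatible_eq_true s hs hacc hd, ih _ _ ?_ ?_⟩)
        · simpa [hd] using hacc
        · simpa [hd] using hn
      by_cases hnd : -d ∈ s
      · refine .inl (.inr ⟨capCompatible_eq_true s hs hacc hnd, ih _ _ ?_ ?_⟩)
        · simpa [hnd] using hacc
        · simpa [hnd] using hn
      simp only [hd, hnd, or_self, decide_false, Bool.false_eq_true, if_false, add_zero] at hn
      exact .inr ⟨hn.trans List.countP_le_length, ih _ _ hacc hn⟩

end capSearch

theorem card_le_countP_capDirections (s : Finset 𝔽₃³) (hs : ∀ x ∈ s, -x ∉ s) :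
    #s ≤ capDirections.countP fun d => d ∈ s ∨ -d ∈ s := by
  rw [List.countP_eq_length_filter]
  refine (card_le_card_of_surjOn (fun d => if d ∈ s then d else -d) ?_).trans
    (List.toFinset_card_le _)
  intro v (hv : v ∈ s)
  have hv0 : v ≠ 0 := fun h => hs v hv (by simpa [h] using hv)
  rcases mem_capDirections_or_neg_mem v hv0 with hD | hD
  · exact ⟨v, by simp [hD, hv], by simp [hv]⟩
  · exact ⟨-v, by simp [hD, hv], by simp [hs v hv]⟩

theorem exists_subset_card_le_three_sum_eq_zero (s : Finset 𝔽₃³) (hs : 9 ≤ #s) :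
    ∃ T ⊆ s, T.Nonempty ∧ #T ≤ 3 ∧ ∑ x ∈ T, x = 0 := by
  have eq_zero_of_eq_neg : ∀ x : 𝔽₃³, x = -x → x = 0 := by decide
  have eq_of_add_add_eq_zero : ∀ x y : 𝔽₃³, x + y + x = 0 → y = x := by decide
  by_contra! hfree
  have hneg : ∀ x ∈ s, -x ∉ s := by
    intro x hx hnx
    obtain h | h := eq_or_ne x (-x)
    · exact hfree {x} (by simpa) (singleton_nonempty x) (by simp)
        (by simpa using eq_zero_of_eq_neg x h)
    · exact hfree {x, -x} (by simp [insert_subset_iff, hx, hnx]) (insert_nonempty _ _)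
        (card_le_two.trans (by norm_num)) (by rw [sum_pair h, add_neg_cancel])
  have htriple : ∀ x ∈ s, ∀ y ∈ s, ∀ p ∈ s, x ≠ y → x + y + p ≠ 0 := by
    intro x hx y hy p hp hxy hsum
    obtain rfl | hpx := eq_or_ne p x
    · exact hxy (eq_of_add_add_eq_zero p y hsum).symm
    obtain rfl | hpy := eq_or_ne p y
    · exact hxy (eq_of_add_add_eq_zero p x (by rwa [add_comm p x]))
    refine hfree {x, y, p} (by simp [insert_subset_iff, hx, hy, hp]) (insert_nonempty _ _)
      card_le_three ?_
    rwa [sum_insert (by simp [hxy, hpx.symm]), sum_pair hpy.symm, ← add_assoc]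
  have := capSearch_eq_true s htriple capDirections [] 9 (by simp)
    (hs.trans (card_le_countP_capDirections s hneg))
  simp [capSearch_capDirections_nine] at this

theorem hasShortZeroSums_seventeen_three : HasShortZeroSums 𝔽₃³ 17 3 := by
  classical
  intro M hM
  by_cases hrep : ∃ x, 3 ≤ M.count x
  · obtain ⟨x, hx⟩ := hrep
    exact ⟨Multiset.replicate 3 x, Multiset.le_count_iff_replicate_le.mp hx, by simp, by simp,
      by rw [Multiset.sum_replicate]; exact (by decide : ∀ y : 𝔽₃³, 3 • y = 0) x⟩
  simp only [not_exists, not_le] at hrep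
  have hs : 9 ≤ #M.toFinset := by
    have hsum : ∑ a ∈ M.toFinset, M.count a ≤ ∑ _a ∈ M.toFinset, 2 :=
      sum_le_sum fun a _ => by have := hrep a; lia
    rw [M.toFinset_sum_count_eq, sum_const, smul_eq_mul] at hsum
    lia
  obtain ⟨T, hTM, hT0, hT3, hTsum⟩ := exists_subset_card_le_three_sum_eq_zero M.toFinset hs
  exact ⟨T.val, (Multiset.le_iff_subset T.nodup).mpr fun x hx => Multiset.mem_toFinset.mp (hTM hx),
    by simpa using hT0.ne_empty, hT3, by simpa using hTsum⟩

theorem exists_le_sum_eq_zero_of_natCard_ker_le {G : Type*} [AddCommGroup G] (φ : G →+ 𝔽₃³)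
    [Finite φ.ker] {t : ℕ} (ht : Nat.card φ.ker ≤ t) (S : Multiset G)
    (hS : 3 * t + 8 ≤ Multiset.card S) : ∃ T ≤ S, T ≠ 0 ∧ T.sum = 0 := by
  classical
  -- `t - 2` blocks of length at most 3 leave at least `3 * 2 + 8 = 2 * 7` terms (`11` if `t = 1`).
  obtain ⟨Bs₁, hcard₁, hle₁, hjoin₁, hB₁⟩ :=
    Multiset.exists_blocks (hasShortZeroSums_seventeen_three.exists_le_map_sum_eq_zero φ) (t - 2) S
      fun j hj => by lia
  obtain ⟨Bs₂, hcard₂, hle₂, -, hB₂⟩ :=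
    Multiset.exists_blocks (hasShortZeroSums_seven_seven.exists_le_map_sum_eq_zero φ) (min t 2)
      (S - Bs₁.join) fun j hj => by rw [Multiset.card_sub hle₁]; lia
  refine Multiset.exists_le_sum_eq_zero_of_blocks φ (Bs := Bs₁ + Bs₂) ?_ ?_ ?_
  · rw [Multiset.join_add, add_comm]
    exact (le_tsub_iff_right hle₁).mp hle₂
  · rw [Multiset.card_add]
    lia
  · intro B hB
    rcases Multiset.mem_add.mp hB with h | h
    exacts [hB₁ B h, hB₂ B h]

def reduceMod3 (t : ℕ) : ZMod 3 × ZMod 3 × ZMod (3 * t) →+ 𝔽₃³ :=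
  (AddMonoidHom.id _).prodMap
    ((AddMonoidHom.id _).prodMap (ZMod.castHom (dvd_mul_right 3 t) (ZMod 3)).toAddMonoidHom)

theorem natCard_ker_reduceMod3 (t : ℕ) [NeZero t] : Nat.card (reduceMod3 t).ker = t := by
  have hsurj : Function.Surjective (reduceMod3 t) :=
    Function.surjective_id.prodMap (Function.surjective_id.prodMap (ZMod.ringHom_surjective
      (ZMod.castHom (dvd_mul_right 3 t) (ZMod 3))))
  have h := (reduceMod3 t).ker.card_mul_index
  rw [AddSubgroup.index_ker, AddMonoidHom.range_eq_top.mpr hsurj, AddSubgroup.card_top] at h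
  simp only [Nat.card_prod, Nat.card_zmod] at h
  lia

theorem davenport_z3z3z3t (t : ℕ) (ht : 0 < t) :
    davenport (ZMod 3 × ZMod 3 × ZMod (3 * t)) ≤ 3 * t + 8 := by
  have : NeZero t := ⟨ht.ne'⟩
  refine Nat.sInf_le fun S hS => ?_
  exact exists_le_sum_eq_zero_of_natCard_ker_le (reduceMod3 t) (natCard_ker_reduceMod3 t).le S
    hS.ge
end

section
/- For every positive integer t, D(Z_4 ⊕ Z_4 ⊕ Z_{4t}) ≤ 4t + 27. -/
section Aux

open Multiset

/-- Monotonicity of bind in the multiset argument. -/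
lemma Multiset.bind_le_bind {α β : Type*} (f : α → Multiset β) {s t : Multiset α}
    (h : s ≤ t) : s.bind f ≤ t.bind f := by
  obtain ⟨u, rfl⟩ := Multiset.le_iff_exists_add.mp h
  rw [Multiset.add_bind]
  exact Multiset.le_add_right _ _

/-- Pigeonhole: a multiset larger than the codomain contains two elements with
the same image. -/
lemma exists_pair_of_card_lt {A B : Type*} [DecidableEq A] [DecidableEq B] [Fintype B]
    (f : A → B) (S : Multiset A) (h : Fintype.card B < Multiset.card S) :
    ∃ x ∈ S, ∃ y ∈ S.erase x, f x = f y := by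
  classical
  have hcount : ∃ b, 2 ≤ (S.map f).count b := by
    by_contra hc
    push_neg at hc
    have h1 : ∀ b, (S.map f).count b ≤ 1 := fun b => by
      have := hc b; omega
    have h2 : Multiset.card (S.map f) ≤ Fintype.card B := by
      rw [← Multiset.toFinset_sum_count_eq]
      calc ∑ b ∈ (S.map f).toFinset, (S.map f).count b
          ≤ ∑ _b ∈ (S.map f).toFinset, 1 := Finset.sum_le_sum fun b _ => h1 b
        _ = (S.map f).toFinset.card := by simp
        _ ≤ Fintype.card B := Finset.card_le_univ _
    rw [Multiset.card_map] at h2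
    omega
  obtain ⟨b, hb⟩ := hcount
  have hbmem : b ∈ S.map f := by
    rw [← Multiset.count_pos]; omega
  obtain ⟨x, hx, hfx⟩ := Multiset.mem_map.mp hbmem
  have hSx : S = x ::ₘ S.erase x := (Multiset.cons_erase hx).symm
  have hcount2 : 1 ≤ ((S.erase x).map f).count b := by
    have hmapeq : S.map f = f x ::ₘ (S.erase x).map f := by
      conv_lhs => rw [hSx]
      rw [Multiset.map_cons]
    rw [hmapeq, Multiset.count_cons, if_pos hfx.symm] at hb
    omega
  have hbmem2 : b ∈ (S.erase x).map f := by
    rw [← Multiset.count_pos]; omega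
  obtain ⟨y, hy, hfy⟩ := Multiset.mem_map.mp hbmem2
  exact ⟨x, hx, y, hy, by rw [hfx, hfy]⟩

/-- Greedy pairing: from any multiset we can extract pairs with equal images
under `f`, leaving at most `Fintype.card B` elements unused. -/
lemma pairs_extract {A B : Type*} [DecidableEq A] [DecidableEq B] [Fintype B]
    (f : A → B) (S : Multiset A) :
    ∃ P : Multiset (A × A), (P.bind fun p => {p.1, p.2}) ≤ S ∧
      (∀ p ∈ P, f p.1 = f p.2) ∧
      Multiset.card S ≤ Fintype.card B + 2 * Multiset.card P := by
  classical
  induction S using Multiset.strongInductionOn with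
  | _ S ih =>
    by_cases h : Multiset.card S ≤ Fintype.card B
    · exact ⟨0, by simp, by simp, by simpa using h⟩
    · push_neg at h
      obtain ⟨x, hx, y, hy, hfxy⟩ := exists_pair_of_card_lt f S h
      set S' := (S.erase x).erase y with hS'
      have hSx : x ::ₘ S.erase x = S := Multiset.cons_erase hx
      have hSy : y ::ₘ S' = S.erase x := Multiset.cons_erase hy
      have hlt : S' < S := by
        calc S' < S.erase x := by
              rw [Multiset.erase_lt]; exact hy
          _ ≤ S := Multiset.erase_le _ _
      obtain ⟨P', hle', hf', hcard'⟩ := ih S' hlt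
      refine ⟨(x, y) ::ₘ P', ?_, ?_, ?_⟩
      · rw [Multiset.cons_bind]
        have hrw : ({(x, y).1, (x, y).2} : Multiset A) + P'.bind (fun p => {p.1, p.2})
            = x ::ₘ y ::ₘ P'.bind (fun p => {p.1, p.2}) := by
          simp [Multiset.insert_eq_cons, Multiset.cons_add]
        rw [hrw, ← hSx, ← hSy]
        exact Multiset.cons_le_cons _ (Multiset.cons_le_cons _ hle')
      · intro p hp
        rcases Multiset.mem_cons.mp hp with h1 | h2
        · rw [h1]; exact hfxy
        · exact hf' p h2
      · have hc1 : Multiset.card S = Multiset.card S' + 2 := by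
          have e1 : Multiset.card (S.erase x) + 1 = Multiset.card S := by
            rw [← hSx]; simp
          have e2 : Multiset.card S' + 1 = Multiset.card (S.erase x) := by
            rw [← hSy]; simp
          omega
        rw [Multiset.card_cons]
        omega

/-- Prefix-sum pigeonhole: from any multiset of at least `n` elements one can
extract a nonempty sub-multiset whose image sum in `ZMod n` vanishes. -/
lemma zmod_zero_sum {A : Type*} {n : ℕ} [NeZero n] (f : A → ZMod n)
    (S : Multiset A) (hS : n ≤ Multiset.card S) :
    ∃ T, T ≤ S ∧ T ≠ 0 ∧ (T.map f).sum = 0 := by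
  obtain ⟨l, rfl⟩ : ∃ l : List A, (l : Multiset A) = S := ⟨S.toList, S.coe_toList⟩
  have hlen : n ≤ l.length := by simpa using hS
  set p : Fin (n + 1) → ZMod n := fun i => ((l.take (i : ℕ)).map f).sum with hp
  have hcards : Fintype.card (ZMod n) < Fintype.card (Fin (n + 1)) := by
    simp [ZMod.card]
  obtain ⟨i, j, hne, hpeq⟩ := Fintype.exists_ne_map_eq_of_card_lt p hcards
  suffices key : ∀ i j : Fin (n + 1), (i : ℕ) < (j : ℕ) → p i = p j →
      ∃ T, T ≤ (l : Multiset A) ∧ T ≠ 0 ∧ (T.map f).sum = 0 by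
    rcases Ne.lt_or_gt hne with h | h
    · exact key i j h hpeq
    · exact key j i h hpeq.symm
  intro i j hij hpe
  set m := (l.take (j : ℕ)).drop (i : ℕ) with hm
  have htj : l.take (j : ℕ) = l.take (i : ℕ) ++ m := by
    conv_lhs => rw [← List.take_append_drop (i : ℕ) (l.take (j : ℕ))]
    rw [List.take_take, min_eq_left hij.le]
  have hsum0 : (m.map f).sum = 0 := by
    have hsp : p j = p i + (m.map f).sum := by
      rw [hp]
      simp only []
      rw [htj, List.map_append, List.sum_append]
    rw [← hpe] at hsp
    exact (left_eq_add.mp hsp)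
  have hjlen : (j : ℕ) ≤ l.length := le_trans (Nat.lt_succ_iff.mp j.isLt) hlen
  have hlm : m.length = (j : ℕ) - (i : ℕ) := by
    rw [hm, List.length_drop, List.length_take, min_eq_left hjlen]
  have hne' : m ≠ [] := by
    intro h0
    rw [h0] at hlm
    simp at hlm
    omega
  have hsub : List.Sublist m l :=
    (List.drop_sublist _ _).trans (List.take_sublist _ _)
  refine ⟨(m : Multiset A), ?_, ?_, ?_⟩
  · exact Multiset.coe_le.mpr hsub.subperm
  · simpa using hne'
  · simpa using hsum0

/-- If the values of two elements of `ZMod n` have the same parity, their sum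
is twice something. -/
lemma exists_half {n : ℕ} [NeZero n] {x y : ZMod n}
    (h : ((x.val : ZMod 2)) = (y.val : ZMod 2)) : ∃ c : ZMod n, x + y = c + c := by
  have hall : ∀ a : ZMod 2, a + a = 0 := by decide
  have h2 : (((x.val + y.val : ℕ)) : ZMod 2) = 0 := by
    push_cast
    rw [h]
    exact hall _
  obtain ⟨k, hk⟩ := (ZMod.natCast_eq_zero_iff _ 2).mp h2
  refine ⟨(k : ZMod n), ?_⟩
  have hx : ((x.val : ℕ) : ZMod n) = x := ZMod.natCast_rightInverse x
  have hy : ((y.val : ℕ) : ZMod n) = y := ZMod.natCast_rightInverse y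
  calc x + y = ((x.val + y.val : ℕ) : ZMod n) := by rw [Nat.cast_add, hx, hy]
    _ = ((2 * k : ℕ) : ZMod n) := by rw [hk]
    _ = (k : ZMod n) + (k : ZMod n) := by push_cast; ring

/-- The parity map on our group. -/
def parG {t : ℕ} (x : ZMod 4 × ZMod 4 × ZMod (4 * t)) : ZMod 2 × ZMod 2 × ZMod 2 :=
  ((x.1.val : ZMod 2), (x.2.1.val : ZMod 2), (x.2.2.val : ZMod 2))

lemma exists_half3 {t : ℕ} [NeZero (4 * t)] {x y : ZMod 4 × ZMod 4 × ZMod (4 * t)}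
    (h : parG x = parG y) : ∃ w, x + y = w + w := by
  simp only [parG, Prod.ext_iff] at h
  obtain ⟨h1, h2, h3⟩ := h
  obtain ⟨c1, hc1⟩ := exists_half h1
  obtain ⟨c2, hc2⟩ := exists_half h2
  obtain ⟨c3, hc3⟩ := exists_half h3
  exact ⟨(c1, c2, c3), by
    rw [Prod.ext_iff, Prod.ext_iff]
    exact ⟨hc1, hc2, hc3⟩⟩

open Classical in
/-- Half of the sum of a parity-matched pair. -/
noncomputable def halfG {t : ℕ}
    (p : (ZMod 4 × ZMod 4 × ZMod (4 * t)) × (ZMod 4 × ZMod 4 × ZMod (4 * t))) :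
    ZMod 4 × ZMod 4 × ZMod (4 * t) :=
  if h : ∃ w, p.1 + p.2 = w + w then h.choose else 0

lemma halfG_spec {t : ℕ} [NeZero (4 * t)]
    (p : (ZMod 4 × ZMod 4 × ZMod (4 * t)) × (ZMod 4 × ZMod 4 × ZMod (4 * t)))
    (h : parG p.1 = parG p.2) : p.1 + p.2 = halfG p + halfG p := by
  have hex := exists_half3 h
  simp only [halfG]
  rw [dif_pos hex]
  exact hex.choose_spec

/-- Sum over the four elements hidden in a pair of pairs. -/
lemma sum_bind_pairs {G : Type*} [AddCommMonoid G]
    (T2 : Multiset ((G × G) × (G × G))) (F : (G × G) × (G × G) → G)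
    (h : ∀ q ∈ T2, q.1.1 + q.1.2 + (q.2.1 + q.2.2) = F q) :
    ((T2.bind fun q => {q.1, q.2}).bind fun p => {p.1, p.2}).sum = (T2.map F).sum := by
  induction T2 using Multiset.induction with
  | empty => simp
  | cons a s ih =>
    rw [Multiset.cons_bind, Multiset.add_bind, Multiset.sum_add, Multiset.map_cons,
      Multiset.sum_cons, ih (fun q hq => h q (Multiset.mem_cons_of_mem hq))]
    have ha := h a (Multiset.mem_cons_self _ _)
    have hfour : (({a.1, a.2} : Multiset (G × G)).bind fun p => {p.1, p.2}).sum
        = a.1.1 + a.1.2 + (a.2.1 + a.2.2) := by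
      simp [Multiset.insert_eq_cons, Multiset.cons_bind, Multiset.singleton_bind]
      abel
    rw [hfour, ha]

end Aux

theorem davenport_z4z4z4t (t : ℕ) (ht : 0 < t) :
    davenport (ZMod 4 × ZMod 4 × ZMod (4 * t)) ≤ 4 * t + 27 := by
  classical
  haveI : NeZero t := ⟨ht.ne'⟩
  haveI : NeZero (4 * t) := ⟨by omega⟩
  apply Nat.sInf_le
  intro S hS
  have hcard8 : Fintype.card (ZMod 2 × ZMod 2 × ZMod 2) = 8 := by
    simp [ZMod.card]
  -- first pairing
  obtain ⟨P1, hP1le, hP1f, hP1card⟩ := pairs_extract (parG (t := t)) S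
  rw [hS, hcard8] at hP1card
  -- second pairing
  obtain ⟨P2, hP2le, hP2f, hP2card⟩ :=
    pairs_extract (fun p => parG (t := t) (halfG p)) P1
  rw [hcard8] at hP2card
  have hcardP2 : t ≤ Multiset.card P2 := by omega
  -- quarter values
  have quart_spec : ∀ q, q ∈ P2 →
      halfG (t := t) q.1 + halfG q.2 = halfG (halfG q.1, halfG q.2) + halfG (halfG q.1, halfG q.2) :=
    fun q hq => halfG_spec (halfG q.1, halfG q.2) (hP2f q hq)
  -- cyclic step in ZMod t
  obtain ⟨T2, hT2le, hT2ne, hT2sum⟩ :=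
    zmod_zero_sum (n := t)
      (fun q => (((halfG (t := t) (halfG q.1, halfG q.2)).2.2.val : ℕ) : ZMod t))
      P2 hcardP2
  have hmemP1 : ∀ q ∈ T2, q.1 ∈ P1 ∧ q.2 ∈ P1 := by
    intro q hq
    have hq2 : q ∈ P2 := Multiset.mem_of_le hT2le hq
    constructor
    · exact Multiset.mem_of_le hP2le (Multiset.mem_bind.mpr ⟨q, hq2, by simp⟩)
    · exact Multiset.mem_of_le hP2le (Multiset.mem_bind.mpr ⟨q, hq2, by simp⟩)
  refine ⟨(T2.bind fun q => {q.1, q.2}).bind fun p => {p.1, p.2}, ?_, ?_, ?_⟩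
  · -- ≤ S
    calc (T2.bind fun q => {q.1, q.2}).bind (fun p => {p.1, p.2})
        ≤ (P2.bind fun q => {q.1, q.2}).bind fun p => {p.1, p.2} :=
          Multiset.bind_le_bind _ (Multiset.bind_le_bind _ hT2le)
      _ ≤ P1.bind fun p => {p.1, p.2} := Multiset.bind_le_bind _ hP2le
      _ ≤ S := hP1le
  · -- ≠ 0
    obtain ⟨q, hq⟩ := Multiset.exists_mem_of_ne_zero hT2ne
    have hmem : q.1.1 ∈ (T2.bind fun q => {q.1, q.2}).bind fun p => {p.1, p.2} := by
      refine Multiset.mem_bind.mpr ⟨q.1, ?_, by simp⟩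
      exact Multiset.mem_bind.mpr ⟨q, hq, by simp⟩
    intro h0
    rw [h0] at hmem
    exact Multiset.notMem_zero _ hmem
  · -- sum = 0
    set quart : ((ZMod 4 × ZMod 4 × ZMod (4 * t)) × (ZMod 4 × ZMod 4 × ZMod (4 * t))) ×
        ((ZMod 4 × ZMod 4 × ZMod (4 * t)) × (ZMod 4 × ZMod 4 × ZMod (4 * t))) →
        ZMod 4 × ZMod 4 × ZMod (4 * t) := fun q => halfG (halfG q.1, halfG q.2) with hquartdef
    have hTsum : ((T2.bind fun q => {q.1, q.2}).bind fun p => {p.1, p.2}).sum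
        = (T2.map fun q => quart q + quart q + (quart q + quart q)).sum := by
      refine sum_bind_pairs T2 _ ?_
      intro q hq
      obtain ⟨hq1, hq2⟩ := hmemP1 q hq
      have e1 : q.1.1 + q.1.2 = halfG q.1 + halfG q.1 := halfG_spec q.1 (hP1f q.1 hq1)
      have e2 : q.2.1 + q.2.2 = halfG q.2 + halfG q.2 := halfG_spec q.2 (hP1f q.2 hq2)
      have e3 := quart_spec q (Multiset.mem_of_le hT2le hq)
      calc q.1.1 + q.1.2 + (q.2.1 + q.2.2)
          = halfG q.1 + halfG q.1 + (halfG q.2 + halfG q.2) := by rw [e1, e2]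
        _ = (halfG q.1 + halfG q.2) + (halfG q.1 + halfG q.2) := by abel
        _ = quart q + quart q + (quart q + quart q) := by
            rw [hquartdef]
            rw [e3]
    rw [hTsum]
    have hsplit : (T2.map fun q => quart q + quart q + (quart q + quart q)).sum
        = (T2.map quart).sum + (T2.map quart).sum
          + ((T2.map quart).sum + (T2.map quart).sum) := by
      rw [Multiset.sum_map_add, Multiset.sum_map_add]
    rw [hsplit]
    set s := (T2.map quart).sum with hs
    have h4 : ∀ a : ZMod 4, a + a + (a + a) = 0 := by decide
    -- third component facts
    set W : Multiset (ZMod (4 * t)) := (T2.map quart).map (fun v => v.2.2) with hW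
    have hs3 : s.2.2 = W.sum := by
      rw [hs, hW]
      have hhom := map_multiset_sum
        ((AddMonoidHom.snd (ZMod 4) (ZMod (4 * t))).comp
          (AddMonoidHom.snd (ZMod 4) (ZMod 4 × ZMod (4 * t)))) (T2.map quart)
      simpa using hhom
    have hWmod : (W.map fun u => ((u.val : ℕ) : ZMod t)).sum = 0 := by
      rw [hW, Multiset.map_map, Multiset.map_map]
      exact hT2sum
    have hthird : W.sum + W.sum + (W.sum + W.sum) = 0 := by
      set M : ℕ := (W.map ZMod.val).sum with hM
      have h1 : W.sum = ((M : ℕ) : ZMod (4 * t)) := by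
        rw [hM, Nat.cast_multiset_sum, Multiset.map_map]
        conv_lhs => rw [← Multiset.map_id W]
        refine congrArg Multiset.sum (Multiset.map_congr rfl ?_)
        intro u _
        exact (ZMod.natCast_rightInverse u).symm
      have h2 : ((M : ℕ) : ZMod t) = 0 := by
        rw [hM, Nat.cast_multiset_sum, Multiset.map_map]
        exact hWmod
      obtain ⟨k, hk⟩ := (ZMod.natCast_eq_zero_iff M t).mp h2
      have hrw : W.sum + W.sum + (W.sum + W.sum) = (((4 * t) * k : ℕ) : ZMod (4 * t)) := by
        rw [h1, ← Nat.cast_add, ← Nat.cast_add]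
        congr 1
        rw [hk]; ring
      rw [hrw, Nat.cast_mul, ZMod.natCast_self, zero_mul]
    have hfst : (s + s + (s + s)).1 = 0 := by
      simp only [Prod.fst_add]
      exact h4 _
    have hsnd1 : (s + s + (s + s)).2.1 = 0 := by
      simp only [Prod.snd_add, Prod.fst_add]
      exact h4 _
    have hsnd2 : (s + s + (s + s)).2.2 = 0 := by
      simp only [Prod.snd_add]
      rw [hs3]
      exact hthird
    rw [Prod.ext_iff, Prod.ext_iff]
    exact ⟨hfst, hsnd1, hsnd2⟩
end
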